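/- There is no tree T with leaf set of size 4 and edge weighting λ: E(T) → ℕ such that all pairwise leaf distances are positive and the exactly-2-relation graph equals K_4 minus one edge (the diamond graph). -/
import Mathlib


open SimpleGraph

noncomputable def treePath {V : Type} (T : SimpleGraph V) (hT : T.IsTree) (x y : V) :
    T.Walk x y := (hT.existsUnique_path x y).choose

/-- The weighted distance between two vertices of a tree: the sum of the weights
`lam` over the edges of the unique path. -/
noncomputable def treeDist {V : Type} (T : SimpleGraph V) (hT : T.IsTree)
    (lam : Sym2 V → ℕ) (x y : V) : ℕ :=
  ((treePath T hT x y).edges.map lam).sum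

/-- A leaf of a tree: a vertex of degree at most one. -/
def IsLeaf {V : Type} (T : SimpleGraph V) (v : V) : Prop :=
  (T.neighborSet v).ncard ≤ 1

/-- `(T, lam)` explains the graph `G` w.r.t. the exactly-`k`-relation, where
`f` identifies the vertices of `G` with the leaves of `T`. -/
def ExplainedBy {α V : Type} (G : SimpleGraph α) (T : SimpleGraph V) (hT : T.IsTree)
    (lam : Sym2 V → ℕ) (f : α → V) (k : ℕ) : Prop :=
  Function.Injective f ∧ (∀ v : V, (∃ a, f a = v) ↔ IsLeaf T v) ∧
    (∀ x y : α, G.Adj x y ↔ treeDist T hT lam (f x) (f y) = k)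

/-- `G` can be explained w.r.t. the exactly-`k`-relation by some finite edge-weighted tree. -/
def Explainable {α : Type} (G : SimpleGraph α) (k : ℕ) : Prop :=
  ∃ (V : Type) (_ : Finite V) (T : SimpleGraph V) (hT : T.IsTree) (lam : Sym2 V → ℕ)
    (f : α → V), ExplainedBy G T hT lam f k

/-- `G` can be explained w.r.t. the exactly-`k`-relation by a tree in which all pairs of
distinct leaves are at positive weighted distance (discrete 0-relation). -/
def ExplainableDiscrete {α : Type} (G : SimpleGraph α) (k : ℕ) : Prop :=
  ∃ (V : Type) (_ : Finite V) (T : SimpleGraph V) (hT : T.IsTree) (lam : Sym2 V → ℕ)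
    (f : α → V), ExplainedBy G T hT lam f k ∧
      ∀ x y : α, x ≠ y → treeDist T hT lam (f x) (f y) ≠ 0

section Aux
set_option linter.unusedSectionVars false
variable {V : Type} {T : SimpleGraph V} (hT : T.IsTree) (lam : Sym2 V → ℕ)

variable [DecidableEq V]

lemma treePath_isPath (x y : V) : (treePath T hT x y).IsPath :=
  (hT.existsUnique_path x y).choose_spec.1

lemma treePath_eq {x y : V} (p : T.Walk x y) (hp : p.IsPath) : p = treePath T hT x y :=
  (hT.existsUnique_path x y).choose_spec.2 p hp

lemma treePath_nil (x : V) : treePath T hT x x = Walk.nil :=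
  (treePath_eq hT Walk.nil Walk.IsPath.nil).symm

lemma treeDist_self (x : V) : treeDist T hT lam x x = 0 := by
  unfold treeDist
  rw [treePath_nil]
  rfl

lemma edge_step {x x' : V} (h : T.Adj x x') (y : V) :
    treePath T hT x y = Walk.cons h (treePath T hT x' y) ∨
    treePath T hT x' y = Walk.cons h.symm (treePath T hT x y) := by
  by_cases hx : x ∈ (treePath T hT x' y).support
  · right
    have hpp : (treePath T hT x' y).IsPath := treePath_isPath hT x' y
    have hedge : (Walk.cons h.symm Walk.nil : T.Walk x' x).IsPath := by
      simp [Walk.cons_isPath_iff, h.ne']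
    have h1 : (treePath T hT x' y).takeUntil x hx = Walk.cons h.symm Walk.nil :=
      (treePath_eq hT _ (hpp.takeUntil hx)).trans (treePath_eq hT _ hedge).symm
    have h2 : (treePath T hT x' y).dropUntil x hx = treePath T hT x y :=
      treePath_eq hT _ (hpp.dropUntil hx)
    have hs := Walk.take_spec (treePath T hT x' y) hx
    rw [h1, h2] at hs
    rw [← hs, Walk.cons_append, Walk.nil_append]
  · left
    exact (treePath_eq hT _ ((treePath_isPath hT x' y).cons hx)).symm

lemma edge_step_dist {x x' : V} (h : T.Adj x x') (y : V) :
    treeDist T hT lam x y = lam s(x, x') + treeDist T hT lam x' y ∨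
    treeDist T hT lam x' y = lam s(x, x') + treeDist T hT lam x y := by
  rcases edge_step hT h y with he | he
  · left; unfold treeDist; rw [he]; simp
  · right; unfold treeDist; rw [he]; simp [Sym2.eq_swap]

lemma walk_sum {x y : V} (w : T.Walk x y) :
    ∃ k, (w.edges.map lam).sum = treeDist T hT lam x y + 2 * k := by
  induction w with
  | nil => exact ⟨0, by simp [treeDist_self hT lam]⟩
  | @cons u v z h p ih =>
    obtain ⟨k, hk⟩ := ih
    have hsum : ((Walk.cons h p).edges.map lam).sum = lam s(u, v) + (p.edges.map lam).sum := by
      simp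
    rcases edge_step_dist hT lam h z with hd | hd
    · exact ⟨k, by omega⟩
    · exact ⟨k + lam s(u, v), by omega⟩

lemma dist_symm (x y : V) : treeDist T hT lam x y = treeDist T hT lam y x := by
  obtain ⟨k, hk⟩ := walk_sum hT lam (treePath T hT y x).reverse
  obtain ⟨k', hk'⟩ := walk_sum hT lam (treePath T hT x y).reverse
  simp only [Walk.edges_reverse, List.map_reverse, List.sum_reverse] at hk hk'
  have e1 : treeDist T hT lam y x = ((treePath T hT y x).edges.map lam).sum := rfl
  have e2 : treeDist T hT lam x y = ((treePath T hT x y).edges.map lam).sum := rfl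
  omega

lemma takeUntil_eq {x y m : V} (hm : m ∈ (treePath T hT x y).support) :
    (treePath T hT x y).takeUntil m hm = treePath T hT x m :=
  treePath_eq hT _ ((treePath_isPath hT x y).takeUntil hm)

lemma dropUntil_eq {x y m : V} (hm : m ∈ (treePath T hT x y).support) :
    (treePath T hT x y).dropUntil m hm = treePath T hT m y :=
  treePath_eq hT _ ((treePath_isPath hT x y).dropUntil hm)

lemma dist_split {x y m : V} (hm : m ∈ (treePath T hT x y).support) :
    treeDist T hT lam x y = treeDist T hT lam x m + treeDist T hT lam m y := by
  have hs := Walk.take_spec (treePath T hT x y) hm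
  rw [takeUntil_eq hT hm, dropUntil_eq hT hm] at hs
  have : treeDist T hT lam x y
      = (((treePath T hT x m).append (treePath T hT m y)).edges.map lam).sum := by
    unfold treeDist; rw [hs]
  rw [this, Walk.edges_append, List.map_append, List.sum_append]; rfl

lemma append_sum (x y z : V) :
    ∃ k, treeDist T hT lam x y + treeDist T hT lam y z = treeDist T hT lam x z + 2 * k := by
  obtain ⟨k, hk⟩ := walk_sum hT lam ((treePath T hT x y).append (treePath T hT y z))
  rw [Walk.edges_append, List.map_append, List.sum_append] at hk
  exact ⟨k, hk⟩


lemma median_aux (z : V) : ∀ (n : ℕ) (x y : V), (treePath T hT x y).length = n →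
    ∃ m, m ∈ (treePath T hT x y).support ∧ m ∈ (treePath T hT x z).support ∧
      m ∈ (treePath T hT y z).support := by
  intro n
  induction n with
  | zero =>
    intro x y hlen
    have hxy : x = y := (treePath T hT x y).eq_of_length_eq_zero hlen
    subst hxy
    exact ⟨x, Walk.start_mem_support _, Walk.start_mem_support _, Walk.start_mem_support _⟩
  | succ n ih =>
    intro x y hlen
    have hxy : x ≠ y := by
      rintro rfl
      rw [treePath_nil hT x] at hlen
      simp at hlen
    obtain ⟨x', h, p', hp⟩ := Walk.exists_eq_cons_of_ne hxy (treePath T hT x y)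
    have hp'path : p'.IsPath := by
      have := treePath_isPath hT x y
      rw [hp] at this
      exact this.of_cons
    have hp'eq : p' = treePath T hT x' y := treePath_eq hT _ hp'path
    have hlen' : (treePath T hT x' y).length = n := by
      rw [← hp'eq]
      have : (treePath T hT x y).length = p'.length + 1 := by rw [hp]; rfl
      omega
    obtain ⟨m, hm1, hm2, hm3⟩ := ih x' y hlen'
    have hmp : m ∈ (treePath T hT x y).support := by
      rw [hp, Walk.support_cons]
      right
      rw [hp'eq]; exact hm1
    rcases edge_step hT h z with hA | hB
    · refine ⟨m, hmp, ?_, hm3⟩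
      rw [hA, Walk.support_cons]
      exact List.mem_cons_of_mem _ hm2
    · by_cases hmx : m = x'
      · subst hmx
        refine ⟨x, Walk.start_mem_support _, Walk.start_mem_support _, ?_⟩
        have hdrop : (treePath T hT y z).dropUntil m hm3 = treePath T hT m z :=
          dropUntil_eq hT hm3
        have hxin : x ∈ (treePath T hT m z).support := by
          rw [hB, Walk.support_cons]
          exact List.mem_cons_of_mem _ (Walk.start_mem_support _)
        have := Walk.support_dropUntil_subset (treePath T hT y z) hm3
        rw [hdrop] at this
        exact this hxin
      · refine ⟨m, hmp, ?_, hm3⟩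
        rw [hB, Walk.support_cons, List.mem_cons] at hm2
        rcases hm2 with hm2 | hm2
        · exact absurd hm2 hmx
        · exact hm2

lemma median (x y z : V) :
    ∃ m, m ∈ (treePath T hT x y).support ∧ m ∈ (treePath T hT x z).support ∧
      m ∈ (treePath T hT y z).support :=
  median_aux hT z _ x y rfl

end Aux

/-- The diamond K_4 − e cannot be explained w.r.t. the exactly-2-relation by any
weighted tree with all pairwise leaf distances positive. -/
theorem stmt11 :
    ¬ ExplainableDiscrete ((⊤ : SimpleGraph (Fin 4)).deleteEdges {s(0, 1)}) 2 := by
  rintro ⟨V, _, T, hT, lam, f, ⟨hinj, hleaf, hadj⟩, hdisc⟩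
  haveI : DecidableEq V := Classical.decEq V
  set a := f 0 with ha
  set b := f 1 with hb
  set c := f 2 with hc
  set d := f 3 with hd
  have adj_of : ∀ (i j : Fin 4), i ≠ j → s(i, j) ≠ s((0 : Fin 4), (1 : Fin 4)) →
      treeDist T hT lam (f i) (f j) = 2 := by
    intro i j hne hs
    refine (hadj i j).mp ?_
    rw [SimpleGraph.deleteEdges_adj]
    exact ⟨by simpa using hne, by simpa using hs⟩
  have h20 : treeDist T hT lam c a = 2 := adj_of 2 0 (by decide) (by decide)
  have h30 : treeDist T hT lam d a = 2 := adj_of 3 0 (by decide) (by decide)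
  have h21 : treeDist T hT lam c b = 2 := adj_of 2 1 (by decide) (by decide)
  have h31 : treeDist T hT lam d b = 2 := adj_of 3 1 (by decide) (by decide)
  have h23 : treeDist T hT lam c d = 2 := adj_of 2 3 (by decide) (by decide)
  have hab2 : treeDist T hT lam a b ≠ 2 := by
    intro hyp
    have := (hadj 0 1).mpr hyp
    rw [SimpleGraph.deleteEdges_adj] at this
    exact this.2 rfl
  have hab0 : treeDist T hT lam a b ≠ 0 := hdisc 0 1 (by decide)
  -- median of (c, d, a)
  obtain ⟨m, hm1, hm2, hm3⟩ := median hT c d a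
  have e1 : treeDist T hT lam c d = treeDist T hT lam c m + treeDist T hT lam m d :=
    dist_split hT lam hm1
  have e2 : treeDist T hT lam c a = treeDist T hT lam c m + treeDist T hT lam m a :=
    dist_split hT lam hm2
  have e3 : treeDist T hT lam d a = treeDist T hT lam d m + treeDist T hT lam m a :=
    dist_split hT lam hm3
  have smd : treeDist T hT lam m d = treeDist T hT lam d m := dist_symm hT lam m d
  have hma : treeDist T hT lam m a = 1 := by omega
  have hcm : treeDist T hT lam c m = 1 := by omega
  have hmd : treeDist T hT lam m d = 1 := by omega
  -- median of (c, d, b)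
  obtain ⟨m', hn1, hn2, hn3⟩ := median hT c d b
  have f1 : treeDist T hT lam c d = treeDist T hT lam c m' + treeDist T hT lam m' d :=
    dist_split hT lam hn1
  have f2 : treeDist T hT lam c b = treeDist T hT lam c m' + treeDist T hT lam m' b :=
    dist_split hT lam hn2
  have f3 : treeDist T hT lam d b = treeDist T hT lam d m' + treeDist T hT lam m' b :=
    dist_split hT lam hn3
  have snd : treeDist T hT lam m' d = treeDist T hT lam d m' := dist_symm hT lam m' d
  have hm'b : treeDist T hT lam m' b = 1 := by omega
  have hcm' : treeDist T hT lam c m' = 1 := by omega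
  have hm'd : treeDist T hT lam m' d = 1 := by omega
  -- both m and m' lie on the path from c to d, so they coincide metrically
  have hmm' : treeDist T hT lam m m' = 0 := by
    have hs := Walk.take_spec (treePath T hT c d) hm1
    rw [takeUntil_eq hT hm1, dropUntil_eq hT hm1] at hs
    have hn1' := hn1
    rw [← hs, Walk.mem_support_append_iff] at hn1'
    rcases hn1' with hcase | hcase
    · have g1 : treeDist T hT lam c m
          = treeDist T hT lam c m' + treeDist T hT lam m' m := dist_split hT lam hcase
      have g2 : treeDist T hT lam m m' = treeDist T hT lam m' m := dist_symm hT lam m m'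
      omega
    · have g1 : treeDist T hT lam m d
          = treeDist T hT lam m m' + treeDist T hT lam m' d := dist_split hT lam hcase
      omega
  -- conclude
  obtain ⟨k1, g1⟩ := append_sum hT lam a m b
  obtain ⟨k2, g2⟩ := append_sum hT lam m m' b
  have sam : treeDist T hT lam a m = treeDist T hT lam m a := dist_symm hT lam a m
  omega
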